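/- arXiv:math-ph/0305060 — 3 statements merged into one kernel-verified Lean document; each statement's English description precedes it below -/
import Mathlib

section
/- Let f : (0,∞) → ℝ be five times continuously differentiable with f(1) = 1 and f(x) = x·f(1/x) for all x > 0. Then f′(1) = 1/2, 2·f⁽³⁾(1) + 3·f⁽²⁾(1) = 0, and f⁽⁵⁾(1) = −(15·f⁽⁴⁾(1) + 60·f⁽³⁾(1) + 60·f⁽²⁾(1))/2. -/
/-!
Differentiating `f x = x * f x⁻¹` repeatedly expresses `f⁽ᵏ⁾ x` through the values `f⁽ʲ⁾ x⁻¹`,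
`j ≤ k` (from order two on, `f''(x) = x⁻³ f''(x⁻¹)`, only `j ≥ 2` occur). At the fixed point
`x = 1` of `x ↦ x⁻¹` the identities of orders 1, 3 and 5 become linear relations among the
derivatives of `f` at `1`.
-/

open Set

theorem ContDiffOn.differentiableAt_iteratedDeriv {f : ℝ → ℝ} {s : Set ℝ} {n : WithTop ℕ∞}
    {m : ℕ} {x : ℝ} (hf : ContDiffOn ℝ n f s) (hs : IsOpen s) (hmn : m < n) (hx : x ∈ s) :
    DifferentiableAt ℝ (iteratedDeriv m f) x :=
  ((hf.differentiableOn_iteratedDerivWithin hmn hs.uniqueDiffOn).congr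
    (iteratedDerivWithin_of_isOpen hs).symm).differentiableAt (hs.mem_nhds hx)

theorem iteratedDeriv_succ_eq_of_eqOn {f g : ℝ → ℝ} {s : Set ℝ} {k : ℕ} {x g' : ℝ}
    (hs : IsOpen s) (hx : x ∈ s) (hfg : EqOn (iteratedDeriv k f) g s) (hg : HasDerivAt g g' x) :
    iteratedDeriv (k + 1) f x = g' := by
  rw [iteratedDeriv_succ]
  exact (hg.congr_of_eventuallyEq (Filter.eventuallyEq_of_mem (hs.mem_nhds hx) hfg)).deriv

theorem HasDerivAt.comp_inv_mul_inv_pow {g : ℝ → ℝ} {g' x : ℝ} (hx : x ≠ 0)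
    (hg : HasDerivAt g g' x⁻¹) (m : ℕ) :
    HasDerivAt (fun y => g y⁻¹ * y⁻¹ ^ m)
      (-(g' * x⁻¹ ^ (m + 2)) - m * (g x⁻¹ * x⁻¹ ^ (m + 1))) x := by
  have hinv := hasDerivAt_inv hx
  refine ((hg.comp x hinv).mul (hinv.pow m)).congr_deriv ?_
  rcases m with _ | m
  · simp
  · simp only [Pi.pow_apply, Function.comp_apply, Nat.add_sub_cancel, Nat.cast_add,
      Nat.cast_one]
    ring

theorem hasDerivAt_iteratedDeriv_inv {f : ℝ → ℝ} {n : WithTop ℕ∞} {k : ℕ}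
    (hf : ContDiffOn ℝ n f (Ioi 0)) (hk : k < n) {x : ℝ} (hx : 0 < x) (m : ℕ) :
    HasDerivAt (fun y => iteratedDeriv k f y⁻¹ * y⁻¹ ^ m)
      (-(iteratedDeriv (k + 1) f x⁻¹ * x⁻¹ ^ (m + 2))
        - m * (iteratedDeriv k f x⁻¹ * x⁻¹ ^ (m + 1))) x := by
  refine HasDerivAt.comp_inv_mul_inv_pow hx.ne' ?_ m
  rw [iteratedDeriv_succ]
  exact (hf.differentiableAt_iteratedDeriv isOpen_Ioi hk (inv_pos.2 hx)).hasDerivAt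

section SelfInversive

variable {f : ℝ → ℝ} (hf : ContDiffOn ℝ 5 f (Ioi 0)) (hsym : ∀ x > 0, f x = x * f x⁻¹)
include hf hsym

theorem iteratedDeriv_one_of_self_inversive {x : ℝ} (hx : 0 < x) :
    iteratedDeriv 1 f x = f x⁻¹ - iteratedDeriv 1 f x⁻¹ * x⁻¹ := by
  have hinv := hasDerivAt_inv hx.ne'
  have hf' : HasDerivAt f (iteratedDeriv 1 f x⁻¹) x⁻¹ := by
    simpa using (hf.differentiableAt_iteratedDeriv isOpen_Ioi (m := 0) (by norm_num)
      (inv_pos.2 hx)).hasDerivAt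
  refine iteratedDeriv_succ_eq_of_eqOn isOpen_Ioi hx (k := 0) (fun y hy => ?_)
    (((hasDerivAt_id x).mul (hf'.comp x hinv)).congr_deriv ?_)
  · simpa using hsym y hy
  · simp only [Function.comp_apply, id]
    field_simp
    ring

theorem iteratedDeriv_two_of_self_inversive {x : ℝ} (hx : 0 < x) :
    iteratedDeriv 2 f x = iteratedDeriv 2 f x⁻¹ * x⁻¹ ^ 3 := by
  refine iteratedDeriv_succ_eq_of_eqOn isOpen_Ioi hx (fun y hy => ?_)
    (((hasDerivAt_iteratedDeriv_inv hf (k := 0) (by norm_num) hx 0).sub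
      (hasDerivAt_iteratedDeriv_inv hf (k := 1) (by norm_num) hx 1)).congr_deriv ?_)
  · simpa using iteratedDeriv_one_of_self_inversive hf hsym hy
  · push_cast
    ring

theorem iteratedDeriv_three_of_self_inversive {x : ℝ} (hx : 0 < x) :
    iteratedDeriv 3 f x =
      -(iteratedDeriv 3 f x⁻¹ * x⁻¹ ^ 5) - 3 * (iteratedDeriv 2 f x⁻¹ * x⁻¹ ^ 4) :=
  iteratedDeriv_succ_eq_of_eqOn isOpen_Ioi hx
    (fun y hy => iteratedDeriv_two_of_self_inversive hf hsym hy)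
    ((hasDerivAt_iteratedDeriv_inv hf (k := 2) (by norm_num) hx 3).congr_deriv
      (by push_cast; ring))

theorem iteratedDeriv_four_of_self_inversive {x : ℝ} (hx : 0 < x) :
    iteratedDeriv 4 f x = iteratedDeriv 4 f x⁻¹ * x⁻¹ ^ 7
      + 8 * (iteratedDeriv 3 f x⁻¹ * x⁻¹ ^ 6) + 12 * (iteratedDeriv 2 f x⁻¹ * x⁻¹ ^ 5) :=
  iteratedDeriv_succ_eq_of_eqOn isOpen_Ioi hx
    (fun y hy => iteratedDeriv_three_of_self_inversive hf hsym hy)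
    (((hasDerivAt_iteratedDeriv_inv hf (k := 3) (by norm_num) hx 5).neg.sub
      ((hasDerivAt_iteratedDeriv_inv hf (k := 2) (by norm_num) hx 4).const_mul 3)).congr_deriv
      (by push_cast; ring))

theorem iteratedDeriv_five_of_self_inversive {x : ℝ} (hx : 0 < x) :
    iteratedDeriv 5 f x = -(iteratedDeriv 5 f x⁻¹ * x⁻¹ ^ 9)
      - 15 * (iteratedDeriv 4 f x⁻¹ * x⁻¹ ^ 8) - 60 * (iteratedDeriv 3 f x⁻¹ * x⁻¹ ^ 7)
      - 60 * (iteratedDeriv 2 f x⁻¹ * x⁻¹ ^ 6) :=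
  iteratedDeriv_succ_eq_of_eqOn isOpen_Ioi hx
    (fun y hy => iteratedDeriv_four_of_self_inversive hf hsym hy)
    ((((hasDerivAt_iteratedDeriv_inv hf (k := 4) (by norm_num) hx 7).add
      ((hasDerivAt_iteratedDeriv_inv hf (k := 3) (by norm_num) hx 6).const_mul 8)).add
      ((hasDerivAt_iteratedDeriv_inv hf (k := 2) (by norm_num) hx 5).const_mul 12)).congr_deriv
      (by push_cast; ring))

end SelfInversive

/-- For a five times continuously differentiable `f : (0,∞) → ℝ`
with `f 1 = 1` and `f x = x * f (1/x)`, one has `f′(1) = 1/2`,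
`2 f⁽³⁾(1) + 3 f⁽²⁾(1) = 0` and
`f⁽⁵⁾(1) = -(15 f⁽⁴⁾(1) + 60 f⁽³⁾(1) + 60 f⁽²⁾(1))/2`. -/
theorem stmt_0 (f : ℝ → ℝ)
    (hf : ContDiffOn ℝ 5 f (Set.Ioi 0))
    (hf1 : f 1 = 1)
    (hsym : ∀ x > (0:ℝ), f x = x * f (1/x)) :
    deriv f 1 = 1/2 ∧
    2 * iteratedDeriv 3 f 1 + 3 * iteratedDeriv 2 f 1 = 0 ∧
    iteratedDeriv 5 f 1 =
      -(15 * iteratedDeriv 4 f 1 + 60 * iteratedDeriv 3 f 1 + 60 * iteratedDeriv 2 f 1) / 2 := by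
  replace hsym : ∀ x > 0, f x = x * f x⁻¹ := by simpa only [one_div] using hsym
  have h1 := iteratedDeriv_one_of_self_inversive hf hsym one_pos
  have h3 := iteratedDeriv_three_of_self_inversive hf hsym one_pos
  have h5 := iteratedDeriv_five_of_self_inversive hf hsym one_pos
  simp only [inv_one, one_pow, mul_one, iteratedDeriv_one, hf1] at h1 h3 h5
  exact ⟨by linarith, by linarith, by linarith⟩
end

section
/- Let f : (0,∞) → ℝ be continuously differentiable with f(x) > 0 for all x > 0, f(1) = 1, and f(x) = x·f(1/x) for all x > 0, let c(x,y) = 1/(y·f(x/y)), and fix x, y > 0 with x ≠ y. Define h₁(x,q,y) = (c(x,q) − y·c(x,y)·c(q,y))/((x−y)(q−y)·c(x,y)·c(q,y)) for q > 0, q ≠ y. Then: (i) lim_{q→x} h₁(x,q,y) = (1 − x·y·c(x,y)²)/(x·(x−y)²·c(x,y)²); (ii) lim_{q→x} (c(x,q) − q·c(x,y)·c(q,y))/((x−q)(y−q)·c(x,y)·c(q,y)) = −(1/2)·(c(x,y) + 2x·∂₁c(x,y))/((x−y)·c(x,y)). -/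
open Filter Topology Set

/-!
The symmetry `f(t) = t f(1/t)` makes `c` symmetric and forces `f'(1) = f(1)/2 = 1/2`;
moreover `c(x, x) = 1/x`.

(i) After rewriting `c(x, q) = c(q, x)`, the quotient is continuous in `q` at `q = x`, so the limit
is its value there.

(ii) With `g(q) = q c(q, x) c(q, y)` we have `g(x) = c(x, y)`, and the quotient is
`-(g(q) - g(x))/(q - x)` divided by `(y - q) c(q, x) c(q, y)`. Its limit is therefore
`-g'(x) / ((y - x) c(x, y) / x)`, where `g'(x) = c/x - f'(1) c/x + ∂₁c(x, y)`.
-/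

theorem HasDerivAt.tendsto_sub_div_sub_mul {g R : ℝ → ℝ} {g' x : ℝ} (hg : HasDerivAt g g' x)
    (hR : ContinuousAt R x) (hR0 : R x ≠ 0) :
    Tendsto (fun q => (g x - g q) / ((x - q) * R q)) (𝓝[≠] x) (𝓝 (g' / R x)) := by
  have := (hasDerivAt_iff_tendsto_slope.mp hg).div (hR.tendsto.mono_left nhdsWithin_le_nhds) hR0
  refine this.congr fun q => ?_
  rw [Pi.div_apply, slope_def_field, div_div, ← neg_sub (g q), ← neg_sub q, neg_mul,
    neg_div_neg_eq]

noncomputable def morozovaChentsov (f : ℝ → ℝ) (x y : ℝ) : ℝ := 1 / (y * f (x / y))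

noncomputable def morozovaChentsovH₁ (f : ℝ → ℝ) (x y z : ℝ) : ℝ :=
  (morozovaChentsov f x y - z * morozovaChentsov f x z * morozovaChentsov f y z) /
    ((x - z) * (y - z) * morozovaChentsov f x z * morozovaChentsov f y z)

section MorozovaChentsov

variable {f : ℝ → ℝ} {x y : ℝ}

theorem deriv_one_eq_half_of_eq_mul_inv (hsym : ∀ t > (0 : ℝ), f t = t * f (1 / t))
    (hd : DifferentiableAt ℝ f 1) : deriv f 1 = f 1 / 2 := by
  have heq : (fun t : ℝ => t * f t⁻¹) =ᶠ[𝓝 1] f := by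
    filter_upwards [Ioi_mem_nhds one_pos] with t ht
    simpa [one_div] using (hsym t ht).symm
  have hd' : HasDerivAt f (deriv f 1) 1⁻¹ := by rw [inv_one]; exact hd.hasDerivAt
  have hder :
      HasDerivAt (fun t : ℝ => t * f t⁻¹) (1 * f 1⁻¹ + 1 * (deriv f 1 * -(1 ^ 2)⁻¹)) 1 :=
    (hasDerivAt_id 1).mul (hd'.comp 1 (hasDerivAt_inv one_ne_zero))
  have := (hder.congr_of_eventuallyEq heq.symm).deriv
  simp only [inv_one, one_pow, one_mul, mul_neg, mul_one] at this
  linarith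

theorem morozovaChentsov_comm (hsym : ∀ t > (0 : ℝ), f t = t * f (1 / t))
    (hx : 0 < x) (hy : 0 < y) : morozovaChentsov f x y = morozovaChentsov f y x := by
  have h := hsym (x / y) (div_pos hx hy)
  rw [one_div_div] at h
  rw [morozovaChentsov, morozovaChentsov, h]
  field_simp

theorem morozovaChentsov_self (hf1 : f 1 = 1) (hx : x ≠ 0) : morozovaChentsov f x x = 1 / x := by
  rw [morozovaChentsov, div_self hx, hf1, mul_one]

theorem continuousAt_morozovaChentsov_left (hf : ContinuousAt f (x / y)) (hy : y ≠ 0)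
    (h0 : f (x / y) ≠ 0) : ContinuousAt (fun z => morozovaChentsov f z y) x := by
  have hfz : ContinuousAt (fun z => f (z / y)) x :=
    ContinuousAt.comp (f := fun z => z / y) hf (continuousAt_id.div_const y)
  exact continuousAt_const.div (continuousAt_const.mul hfz) (mul_ne_zero hy h0)

theorem hasDerivAt_morozovaChentsov_left {f' : ℝ} (hf : HasDerivAt f f' (x / y)) (hy : y ≠ 0)
    (h0 : f (x / y) ≠ 0) :
    HasDerivAt (fun z => morozovaChentsov f z y) (-f' / (y * f (x / y)) ^ 2) x := by
  have hfz : HasDerivAt (fun z => y * f (z / y)) (y * (f' * (1 / y))) x :=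
    (hf.comp x ((hasDerivAt_id x).div_const y)).const_mul y
  have h := hfz.fun_inv (mul_ne_zero hy h0)
  rw [show y * (f' * (1 / y)) = f' by field_simp] at h
  simpa only [morozovaChentsov, one_div] using h

theorem tendsto_morozovaChentsovH₁_snd (hsym : ∀ t > (0 : ℝ), f t = t * f (1 / t))
    (hf1 : f 1 = 1) (hf1_cont : ContinuousAt f 1) (hf_cont : ContinuousAt f (x / y))
    (h0 : f (x / y) ≠ 0) (hx : 0 < x) (hy : 0 < y) (hxy : x ≠ y) :
    Tendsto (fun q => morozovaChentsovH₁ f x q y) (𝓝[≠] x)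
      (𝓝 ((1 - x * y * morozovaChentsov f x y ^ 2) /
        (x * (x - y) ^ 2 * morozovaChentsov f x y ^ 2))) := by
  have hφ : ContinuousAt (fun q => morozovaChentsov f q x) x :=
    continuousAt_morozovaChentsov_left (by rwa [div_self hx.ne']) hx.ne'
      (by rw [div_self hx.ne', hf1]; exact one_ne_zero)
  have hψ := continuousAt_morozovaChentsov_left hf_cont hy.ne' h0
  have hc0 : morozovaChentsov f x y ≠ 0 := by simp [morozovaChentsov, hy.ne', h0]
  have hxy' : x - y ≠ 0 := sub_ne_zero.mpr hxy
  have hF : ContinuousAt (fun q => (morozovaChentsov f q x - y * morozovaChentsov f x y *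
      morozovaChentsov f q y) / ((x - y) * (q - y) * morozovaChentsov f x y *
      morozovaChentsov f q y)) x :=
    (hφ.sub (continuousAt_const.mul hψ)).div (by fun_prop) (by simp [hxy', hc0])
  refine ((hF.tendsto.mono_left nhdsWithin_le_nhds).congr' ?_).trans_eq ?_
  · filter_upwards [nhdsWithin_le_nhds (Ioi_mem_nhds hx)] with q hq
    rw [morozovaChentsovH₁, morozovaChentsov_comm hsym hx hq]
  · rw [morozovaChentsov_self hf1 hx.ne']
    field_simp

theorem tendsto_morozovaChentsovH₁_thd (hsym : ∀ t > (0 : ℝ), f t = t * f (1 / t))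
    (hf1 : f 1 = 1) (hf1_diff : DifferentiableAt ℝ f 1) (hf_diff : DifferentiableAt ℝ f (x / y))
    (h0 : f (x / y) ≠ 0) (hx : 0 < x) (hy : 0 < y) (hxy : x ≠ y) :
    Tendsto (fun q => morozovaChentsovH₁ f x y q) (𝓝[≠] x)
      (𝓝 (-(1 / 2) *
        (morozovaChentsov f x y + 2 * x * deriv (fun z => morozovaChentsov f z y) x) /
        ((x - y) * morozovaChentsov f x y))) := by
  have hf'1 : HasDerivAt f (1 / 2) (x / x) := by
    have h := deriv_one_eq_half_of_eq_mul_inv hsym hf1_diff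
    rw [hf1] at h
    rw [div_self hx.ne', ← h]
    exact hf1_diff.hasDerivAt
  have hφ := hasDerivAt_morozovaChentsov_left hf'1 hx.ne'
    (by rw [div_self hx.ne', hf1]; exact one_ne_zero)
  have hψ :=
    (hasDerivAt_morozovaChentsov_left hf_diff.hasDerivAt hy.ne' h0).differentiableAt.hasDerivAt
  have hg := ((hasDerivAt_id' x).fun_mul hφ).fun_mul hψ
  have hR : ContinuousAt (fun q => (y - q) * morozovaChentsov f q x * morozovaChentsov f q y) x :=
    ((continuousAt_const.sub continuousAt_id).mul hφ.continuousAt).mul hψ.continuousAt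
  have hc0 : morozovaChentsov f x y ≠ 0 := by simp [morozovaChentsov, hy.ne', h0]
  have hyx : y - x ≠ 0 := sub_ne_zero.mpr hxy.symm
  have hR0 : (y - x) * morozovaChentsov f x x * morozovaChentsov f x y ≠ 0 := by
    simp [morozovaChentsov_self hf1 hx.ne', hyx, hx.ne', hc0]
  refine ((hg.tendsto_sub_div_sub_mul hR hR0).congr' ?_).trans_eq ?_
  · filter_upwards [nhdsWithin_le_nhds (Ioi_mem_nhds hx)] with q hq
    rw [morozovaChentsovH₁, morozovaChentsov_comm hsym hx hq, morozovaChentsov_comm hsym hy hq,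
      morozovaChentsov_self hf1 hx.ne', mul_one_div_cancel hx.ne', one_mul]
    ring
  · have hxy' : x - y ≠ 0 := sub_ne_zero.mpr hxy
    rw [morozovaChentsov_self hf1 hx.ne', div_self hx.ne', hf1]
    congr 1
    field_simp
    ring

end MorozovaChentsov

/-- The values of `h₁` at coincident arguments, computed as limits:
(i) `h₁(x,x,y) = lim_{q→x} h₁(x,q,y) = (1 - xy c(x,y)²)/(x (x-y)² c(x,y)²)`;
(ii) `h₁(x,y,x) = lim_{q→x} h₁(x,y,q)
      = -(1/2) (c(x,y) + 2x ∂₁c(x,y))/((x-y) c(x,y))`,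
where `c(x,y) = 1/(y f(x/y))` is the Morozova–Chentsov function and
`h₁(x,y,z) = (c(x,y) - z c(x,z) c(y,z))/((x-z)(y-z) c(x,z) c(y,z))`. -/
theorem stmt_3 (f : ℝ → ℝ)
    (hf : ContDiffOn ℝ 1 f (Set.Ioi 0))
    (hpos : ∀ x > (0:ℝ), 0 < f x)
    (hf1 : f 1 = 1)
    (hsym : ∀ x > (0:ℝ), f x = x * f (1/x))
    (c : ℝ → ℝ → ℝ)
    (hc : ∀ x > (0:ℝ), ∀ y > (0:ℝ), c x y = 1 / (y * f (x/y)))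
    (x y : ℝ) (hx : 0 < x) (hy : 0 < y) (hxy : x ≠ y) :
    Tendsto (fun q => (c x q - y * c x y * c q y) /
        ((x - y) * (q - y) * c x y * c q y)) (𝓝[≠] x)
      (𝓝 ((1 - x * y * (c x y)^2) / (x * (x - y)^2 * (c x y)^2))) ∧
    Tendsto (fun q => (c x y - q * c x q * c y q) /
        ((x - q) * (y - q) * c x q * c y q)) (𝓝[≠] x)
      (𝓝 (-(1/2) * (c x y + 2 * x * derivWithin (fun z => c z y) (Set.Ioi 0) x) /
          ((x - y) * c x y))) := by
  have hc' : ∀ z > (0:ℝ), ∀ w > (0:ℝ), c z w = morozovaChentsov f z w := hc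
  have hf_diff : ∀ z > (0:ℝ), DifferentiableAt ℝ f z := fun z hz =>
    (hf.contDiffAt (Ioi_mem_nhds hz)).differentiableAt one_ne_zero
  have hxy_pos : 0 < x / y := div_pos hx hy
  have hderiv :
      derivWithin (fun z => c z y) (Ioi 0) x = deriv (fun z => morozovaChentsov f z y) x := by
    rw [derivWithin_congr (s := Ioi 0) (fun z hz => hc' z hz y hy) (hc' x hx y hy),
      derivWithin_of_isOpen isOpen_Ioi hx]
  rw [hderiv, hc' x hx y hy]
  have hq_pos : ∀ᶠ q in 𝓝[≠] x, 0 < q := nhdsWithin_le_nhds (Ioi_mem_nhds hx)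
  constructor
  · refine (tendsto_morozovaChentsovH₁_snd hsym hf1 (hf_diff 1 one_pos).continuousAt
      (hf_diff _ hxy_pos).continuousAt (hpos _ hxy_pos).ne' hx hy hxy).congr' ?_
    filter_upwards [hq_pos] with q hq
    rw [morozovaChentsovH₁, hc' x hx q hq, hc' q hq y hy]
  · refine (tendsto_morozovaChentsovH₁_thd hsym hf1 (hf_diff 1 one_pos) (hf_diff _ hxy_pos)
      (hpos _ hxy_pos).ne' hx hy hxy).congr' ?_
    filter_upwards [hq_pos] with q hq
    rw [morozovaChentsovH₁, hc' x hx q hq, hc' y hy q hq]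
end

section
/- Let f : (0,∞) → ℝ be twice continuously differentiable with f(x) > 0 for all x > 0, f(1) = 1, and f(x) = x·f(1/x) for all x > 0. Let a ∈ (−1,1) with a ≠ 0, and set x = (1+a)/2, y = (1−a)/2 and c = (1−a)/(1+a). Then sh₁(x,y) − (1/2)·sh₂(x,y) + 2·sh₃(x,y) − sh₄(x,y) + 3/2 = 14(a−1)·f′(c)²/((1+a)³·f(c)²) + 2(a²+7a−6)·f′(c)/((1+a)²·a·f(c)) + 8(1−a)·f″(c)/((1+a)³·f(c)) + 2(1+a)·f(c)/a² + (3a³+5a²+8a−4)/(2(1+a)·a²). -/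
/-!
Each of the sixteen one-sided limits in the `sh`'s is either the value at the coincident point of
a function continuous there, or a removable `0/0` singularity whose limit is a derivative: of `c`
in its first argument (for `h₂`), of `∂₁ log c` in its second argument (for `h₃`), or of
`q ↦ q·c(x,q)·c(y,q)`, whose value at `q = x` is `c(x,y)` (for `h₁`). The symmetry
`f(t) = t·f(1/t)` makes `c` symmetric, forces `f'(1) = f(1)/2`, and expresses `f, f', f''` at
`x/y` through their values at `y/x = (1-a)/(1+a)`; what remains is an identity of rational
functions in `a`, `f(c)`, `f'(c)`, `f''(c)`.
-/

open Filter Topology Set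

/-- The Morozova–Chentsov function `c(x,y) = 1/(y·f(x/y))` of `f`. -/
noncomputable def MC (f : ℝ → ℝ) (x y : ℝ) : ℝ := 1 / (y * f (x / y))

/-- `∂₁(log c)(z,x)`: the partial derivative of `log c` in its first variable. -/
noncomputable def d1logMC (f : ℝ → ℝ) (z x : ℝ) : ℝ :=
  derivWithin (fun w => Real.log (MC f w x)) (Set.Ioi 0) z

/-- `h₁(x,y,z) = (c(x,y) − z·c(x,z)·c(y,z))/((x−z)(y−z)·c(x,z)·c(y,z))`. -/
noncomputable def H1 (f : ℝ → ℝ) (x y z : ℝ) : ℝ :=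
  (MC f x y - z * MC f x z * MC f y z) / ((x - z) * (y - z) * MC f x z * MC f y z)

/-- `h₂(x,y,z) = (c(x,z)−c(y,z))²/((x−y)²·c(x,y)·c(x,z)·c(y,z))`. -/
noncomputable def H2 (f : ℝ → ℝ) (x y z : ℝ) : ℝ :=
  (MC f x z - MC f y z)^2 / ((x - y)^2 * MC f x y * MC f x z * MC f y z)

/-- `h₃(x,y,z) = (z/(x−y))·(∂₁(log c)(z,x) − ∂₁(log c)(z,y))`. -/
noncomputable def H3 (f : ℝ → ℝ) (x y z : ℝ) : ℝ :=
  z / (x - y) * (d1logMC f z x - d1logMC f z y)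

/-- `h₄(x,y,z) = z·∂₁(log c)(z,x)·∂₁(log c)(z,y)`. -/
noncomputable def H4 (f : ℝ → ℝ) (x y z : ℝ) : ℝ :=
  z * d1logMC f z x * d1logMC f z y

/-- The sum-function `sh(x,y) = h(x,x,y) + 2·h(x,y,x) + h(y,y,x) + 2·h(y,x,y)`,
where the values of `h` at coincident arguments are defined by taking limits. -/
noncomputable def sh (h : ℝ → ℝ → ℝ → ℝ) (x y : ℝ) : ℝ :=
  limUnder (𝓝[≠] x) (fun q => h x q y) + 2 * limUnder (𝓝[≠] x) (fun q => h x y q) +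
  limUnder (𝓝[≠] y) (fun q => h y q x) + 2 * limUnder (𝓝[≠] y) (fun q => h y x q)

section

variable {f : ℝ → ℝ} {t x y z : ℝ}

lemma hasDerivAt_const_div (c : ℝ) (hz : z ≠ 0) :
    HasDerivAt (fun q => c / q) (-(c / z ^ 2)) z := by
  simpa [div_eq_mul_inv] using (hasDerivAt_inv hz).const_mul c

lemma hasDerivAt_mul_comp_div (hf : DifferentiableOn ℝ f (Ioi 0)) (hx : 0 < x) (hz : 0 < z) :
    HasDerivAt (fun q => q * f (x / q)) (f (x / z) - x / z * deriv f (x / z)) z := by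
  have hcomp : HasDerivAt (fun q => f (x / q)) _ z :=
    (hf.differentiableAt (Ioi_mem_nhds (div_pos hx hz))).hasDerivAt.comp z
      (hasDerivAt_const_div x hz.ne')
  refine ((hasDerivAt_id' z).fun_mul hcomp).congr_deriv ?_
  field_simp
  ring

lemma hasDerivAt_deriv_of_contDiffOn (hf : ContDiffOn ℝ 2 f (Ioi 0)) (ht : 0 < t) :
    HasDerivAt (deriv f) (deriv (deriv f) t) t := by
  have hdf : ContDiffOn ℝ 1 (deriv f) (Ioi 0) := hf.deriv_of_isOpen isOpen_Ioi (by norm_num)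
  exact ((hdf.differentiableOn one_ne_zero).differentiableAt (Ioi_mem_nhds ht)).hasDerivAt

lemma deriv_eq_of_symm (hf : DifferentiableOn ℝ f (Ioi 0))
    (hsym : ∀ x > (0:ℝ), f x = x * f (1/x)) (ht : 0 < t) :
    deriv f t = f (1/t) - 1/t * deriv f (1/t) :=
  ((hasDerivAt_mul_comp_div hf one_pos ht).congr_of_eventuallyEq
    (eventuallyEq_of_mem (Ioi_mem_nhds ht) hsym)).deriv

lemma deriv_one_of_symm (hf : DifferentiableOn ℝ f (Ioi 0))
    (hsym : ∀ x > (0:ℝ), f x = x * f (1/x)) : deriv f 1 = f 1 / 2 := by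
  have h := deriv_eq_of_symm hf hsym one_pos
  rw [div_one, one_mul] at h
  linarith

lemma deriv_deriv_eq_of_symm (hf : ContDiffOn ℝ 2 f (Ioi 0))
    (hsym : ∀ x > (0:ℝ), f x = x * f (1/x)) (ht : 0 < t) :
    deriv (deriv f) t = (1/t)^3 * deriv (deriv f) (1/t) := by
  have hf' : DifferentiableOn ℝ f (Ioi 0) := hf.differentiableOn (by norm_num)
  have hinv := hasDerivAt_const_div 1 ht.ne'
  have hit : 0 < 1 / t := by positivity
  have hf_inv : HasDerivAt (fun s => f (1 / s)) _ t :=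
    (hf'.differentiableAt (Ioi_mem_nhds hit)).hasDerivAt.comp t hinv
  have hdf_inv : HasDerivAt (fun s => deriv f (1 / s)) _ t :=
    (hasDerivAt_deriv_of_contDiffOn hf hit).comp t hinv
  have hsymm : deriv f =ᶠ[𝓝 t] fun s => f (1 / s) - 1 / s * deriv f (1 / s) :=
    eventuallyEq_of_mem (Ioi_mem_nhds ht) fun s hs => deriv_eq_of_symm hf' hsym hs
  rw [hsymm.deriv_eq, (hf_inv.fun_sub (hinv.fun_mul hdf_inv)).deriv]
  field_simp
  ring

lemma MC_pos (hpos : ∀ x > (0:ℝ), 0 < f x) (hx : 0 < x) (hy : 0 < y) : 0 < MC f x y := by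
  have := hpos (x / y) (div_pos hx hy)
  rw [MC]
  positivity

lemma MC_comm (hsym : ∀ x > (0:ℝ), f x = x * f (1/x)) (hx : 0 < x) (hy : 0 < y) :
    MC f x y = MC f y x := by
  rw [MC, MC, hsym (x / y) (div_pos hx hy), one_div_div]
  field_simp

lemma MC_self (hf1 : f 1 = 1) (hx : x ≠ 0) : MC f x x = 1 / x := by
  rw [MC, div_self hx, hf1, mul_one]

lemma hasDerivAt_MC_fst (hf : DifferentiableOn ℝ f (Ioi 0)) (hpos : ∀ x > (0:ℝ), 0 < f x)
    (hz : 0 < z) (hy : 0 < y) :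
    HasDerivAt (fun w => MC f w y) (-deriv f (z / y) / (y * f (z / y)) ^ 2) z := by
  have hu : 0 < z / y := div_pos hz hy
  have hinner : HasDerivAt (fun w => y * f (w / y)) (deriv f (z / y)) z := by
    have hcomp : HasDerivAt (fun w => f (w / y)) _ z :=
      (hf.differentiableAt (Ioi_mem_nhds hu)).hasDerivAt.comp z ((hasDerivAt_id' z).div_const y)
    refine (hcomp.const_mul y).congr_deriv ?_
    field_simp
  have := hpos _ hu
  simpa only [MC, one_div] using hinner.fun_inv (by positivity)

lemma hasDerivAt_MC_snd (hf : DifferentiableOn ℝ f (Ioi 0)) (hpos : ∀ x > (0:ℝ), 0 < f x)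
    (hx : 0 < x) (hz : 0 < z) :
    HasDerivAt (fun q => MC f x q)
      (-(f (x / z) - x / z * deriv f (x / z)) / (z * f (x / z)) ^ 2) z := by
  have := hpos _ (div_pos hx hz)
  simpa only [MC, one_div] using (hasDerivAt_mul_comp_div hf hx hz).fun_inv (by positivity)

lemma d1logMC_eq (hf : DifferentiableOn ℝ f (Ioi 0)) (hpos : ∀ x > (0:ℝ), 0 < f x)
    (hz : 0 < z) (hx : 0 < x) :
    d1logMC f z x = -deriv f (z / x) / (x * f (z / x)) := by
  have := hpos _ (div_pos hz hx)
  rw [d1logMC, derivWithin_of_isOpen isOpen_Ioi hz,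
    ((hasDerivAt_MC_fst hf hpos hz hx).log (MC_pos hpos hz hx).ne').deriv, MC]
  field_simp

lemma continuousAt_d1logMC_fst (hf : ContDiffOn ℝ 2 f (Ioi 0)) (hpos : ∀ x > (0:ℝ), 0 < f x)
    (hz : 0 < z) (hx : 0 < x) :
    ContinuousAt (fun q => d1logMC f q x) z := by
  have hu : 0 < z / x := div_pos hz hx
  have hdiv : ContinuousAt (fun q => q / x) z := continuousAt_id.div_const x
  have hcf : ContinuousAt f (z / x) := hf.continuousOn.continuousAt (Ioi_mem_nhds hu)
  have hcdf : ContinuousAt (deriv f) (z / x) :=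
    (hasDerivAt_deriv_of_contDiffOn hf hu).continuousAt
  have := hpos _ hu
  refine ContinuousAt.congr ?_ (eventuallyEq_of_mem (Ioi_mem_nhds hz) fun q hq =>
    (d1logMC_eq (hf.differentiableOn (by norm_num)) hpos hq hx).symm)
  exact (hcdf.comp (f := fun q => q / x) hdiv).neg.div
    (continuousAt_const.mul (hcf.comp (f := fun q => q / x) hdiv)) (by positivity)

lemma hasDerivAt_d1logMC_snd (hf : ContDiffOn ℝ 2 f (Ioi 0)) (hpos : ∀ x > (0:ℝ), 0 < f x)
    (hx : 0 < x) (hy : 0 < y) :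
    HasDerivAt (fun q => d1logMC f y q)
      ((y / x * deriv (deriv f) (y / x) * f (y / x) + deriv f (y / x) * f (y / x)
          - y / x * deriv f (y / x) ^ 2) / (x ^ 2 * f (y / x) ^ 2)) x := by
  have hf' : DifferentiableOn ℝ f (Ioi 0) := hf.differentiableOn (by norm_num)
  have hv : 0 < y / x := div_pos hy hx
  have := hpos _ hv
  have hcomp : HasDerivAt (fun q => deriv f (y / q)) _ x :=
    (hasDerivAt_deriv_of_contDiffOn hf hv).comp x (hasDerivAt_const_div y hx.ne')
  have hquot := hcomp.fun_neg.fun_div (hasDerivAt_mul_comp_div hf' hy hx) (by positivity)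
  refine HasDerivAt.congr_of_eventuallyEq ?_ (eventuallyEq_of_mem (Ioi_mem_nhds hx)
    fun q hq => d1logMC_eq hf' hpos hy hq)
  refine hquot.congr_deriv ?_
  field_simp
  ring

lemma sh_eq_of_tendsto {h : ℝ → ℝ → ℝ → ℝ} {A B C D : ℝ}
    (hA : Tendsto (fun q => h x q y) (𝓝[≠] x) (𝓝 A))
    (hB : Tendsto (fun q => h x y q) (𝓝[≠] x) (𝓝 B))
    (hC : Tendsto (fun q => h y q x) (𝓝[≠] y) (𝓝 C))
    (hD : Tendsto (fun q => h y x q) (𝓝[≠] y) (𝓝 D)) :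
    sh h x y = A + 2 * B + C + 2 * D := by
  rw [sh, hA.limUnder_eq, hB.limUnder_eq, hC.limUnder_eq, hD.limUnder_eq]

lemma tendsto_H1_middle (hf : DifferentiableOn ℝ f (Ioi 0)) (hpos : ∀ x > (0:ℝ), 0 < f x)
    (hf1 : f 1 = 1) (hx : 0 < x) (hy : 0 < y) (hxy : x ≠ y) :
    Tendsto (fun q => H1 f x q y) (𝓝[≠] x)
      (𝓝 (y * (y * f (x / y) ^ 2 - x) / (x * (x - y) ^ 2))) := by
  have hMxy := MC_pos hpos hx hy
  have hcont : ContinuousAt (fun q => H1 f x q y) x := by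
    have := (hasDerivAt_MC_snd hf hpos hx hx).continuousAt
    have := (hasDerivAt_MC_fst hf hpos hx hy).continuousAt
    refine ContinuousAt.div (by fun_prop) (by fun_prop) ?_
    have := sub_ne_zero.mpr hxy
    positivity
  convert hcont.tendsto.mono_left nhdsWithin_le_nhds using 2
  have := hpos _ (div_pos hx hy)
  rw [H1, MC_self hf1 hx.ne', MC]
  field_simp

lemma tendsto_H1_last (hf : DifferentiableOn ℝ f (Ioi 0)) (hpos : ∀ x > (0:ℝ), 0 < f x)
    (hf1 : f 1 = 1) (hsym : ∀ x > (0:ℝ), f x = x * f (1/x)) (hx : 0 < x) (hy : 0 < y)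
    (hxy : x ≠ y) :
    Tendsto (fun q => H1 f x y q) (𝓝[≠] x)
      (𝓝 ((1 / 2 - y / x * deriv f (y / x) / f (y / x)) / (x - y))) := by
  have hMxx := hasDerivAt_MC_snd hf hpos hx hx
  have hMyx := hasDerivAt_MC_snd hf hpos hy hx
  have hN := ((hasDerivAt_id' x).fun_mul hMxx).fun_mul hMyx
  have hNx : x * MC f x x * MC f y x = MC f x y := by
    rw [MC_self hf1 hx.ne', MC_comm hsym hx hy]
    field_simp
  have hE : ContinuousAt (fun q => (y - q) * MC f x q * MC f y q) x := by
    have := hMxx.continuousAt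
    have := hMyx.continuousAt
    fun_prop
  have hEx : (y - x) * MC f x x * MC f y x ≠ 0 := by
    have := MC_pos hpos hx hx
    have := MC_pos hpos hy hx
    have := sub_ne_zero.mpr hxy.symm
    positivity
  have key : Tendsto (fun q => H1 f x y q) (𝓝[≠] x) _ :=
    ((hasDerivAt_iff_tendsto_slope.mp hN).div (hE.tendsto.mono_left nhdsWithin_le_nhds)
      hEx).congr fun q => by
      rw [Pi.div_apply, slope_def_field, hNx, H1, div_div, ← neg_sub q x, neg_mul, neg_mul,
        neg_mul, div_neg, ← neg_div, neg_sub]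
      ring
  convert key using 2
  have := hpos _ (div_pos hy hx)
  simp only [MC, div_self hx.ne', hf1, deriv_one_of_symm hf hsym]
  field_simp
  ring

lemma tendsto_H2_middle (hf : DifferentiableOn ℝ f (Ioi 0)) (hpos : ∀ x > (0:ℝ), 0 < f x)
    (hf1 : f 1 = 1) (hx : 0 < x) (hy : 0 < y) :
    Tendsto (fun q => H2 f x q y) (𝓝[≠] x)
      (𝓝 (x * deriv f (x / y) ^ 2 / (y ^ 2 * f (x / y) ^ 2))) := by
  have hMx := hasDerivAt_MC_fst hf hpos hx hy
  have hE : ContinuousAt (fun q => MC f x q * MC f x y * MC f q y) x := by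
    have := (hasDerivAt_MC_snd hf hpos hx hx).continuousAt
    have := hMx.continuousAt
    fun_prop
  have hEx : MC f x x * MC f x y * MC f x y ≠ 0 := by
    have := MC_pos hpos hx hx
    have := MC_pos hpos hx hy
    positivity
  have key : Tendsto (fun q => H2 f x q y) (𝓝[≠] x) _ :=
    (((hasDerivAt_iff_tendsto_slope.mp hMx).pow 2).div (hE.tendsto.mono_left nhdsWithin_le_nhds)
      hEx).congr fun q => by
      rw [Pi.div_apply, slope_def_field, H2, div_pow, div_div, ← neg_sub q x, neg_sq]
      ring
  convert key using 2
  have := hpos _ (div_pos hx hy)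
  rw [MC_self hf1 hx.ne', MC]
  field_simp

lemma tendsto_H2_last (hf : DifferentiableOn ℝ f (Ioi 0)) (hpos : ∀ x > (0:ℝ), 0 < f x)
    (hf1 : f 1 = 1) (hsym : ∀ x > (0:ℝ), f x = x * f (1/x)) (hx : 0 < x) (hy : 0 < y)
    (hxy : x ≠ y) :
    Tendsto (fun q => H2 f x y q) (𝓝[≠] x)
      (𝓝 ((y * f (x / y) - x) ^ 2 / (x * (x - y) ^ 2))) := by
  have hcont : ContinuousAt (fun q => H2 f x y q) x := by
    have := (hasDerivAt_MC_snd hf hpos hx hx).continuousAt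
    have := (hasDerivAt_MC_snd hf hpos hy hx).continuousAt
    refine ContinuousAt.div (by fun_prop) (by fun_prop) ?_
    have := MC_pos hpos hx hx
    have := MC_pos hpos hx hy
    have := MC_pos hpos hy hx
    have := sub_ne_zero.mpr hxy
    positivity
  convert hcont.tendsto.mono_left nhdsWithin_le_nhds using 2
  have := hpos _ (div_pos hx hy)
  rw [H2, MC_self hf1 hx.ne', MC_comm hsym hy hx, MC]
  field_simp

lemma tendsto_H3_middle (hf : ContDiffOn ℝ 2 f (Ioi 0)) (hpos : ∀ x > (0:ℝ), 0 < f x)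
    (hx : 0 < x) (hy : 0 < y) :
    Tendsto (fun q => H3 f x q y) (𝓝[≠] x)
      (𝓝 (y * ((y / x * deriv (deriv f) (y / x) * f (y / x) + deriv f (y / x) * f (y / x)
          - y / x * deriv f (y / x) ^ 2) / (x ^ 2 * f (y / x) ^ 2)))) :=
  ((hasDerivAt_iff_tendsto_slope.mp (hasDerivAt_d1logMC_snd hf hpos hx hy)).const_mul y).congr
    fun q => by
      rw [slope_def_field, H3, ← neg_sub q x, div_neg]
      ring

lemma tendsto_H3_last (hf : ContDiffOn ℝ 2 f (Ioi 0)) (hpos : ∀ x > (0:ℝ), 0 < f x)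
    (hf1 : f 1 = 1) (hsym : ∀ x > (0:ℝ), f x = x * f (1/x)) (hx : 0 < x) (hy : 0 < y) :
    Tendsto (fun q => H3 f x y q) (𝓝[≠] x)
      (𝓝 (x / (x - y) * (deriv f (x / y) / (y * f (x / y)) - 1 / (2 * x)))) := by
  have hf' : DifferentiableOn ℝ f (Ioi 0) := hf.differentiableOn (by norm_num)
  have hcont : ContinuousAt (fun q => H3 f x y q) x := by
    have := continuousAt_d1logMC_fst hf hpos hx hx
    have := continuousAt_d1logMC_fst hf hpos hx hy
    unfold H3
    fun_prop
  convert hcont.tendsto.mono_left nhdsWithin_le_nhds using 2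
  rw [H3, d1logMC_eq hf' hpos hx hx, d1logMC_eq hf' hpos hx hy, div_self hx.ne', hf1,
    deriv_one_of_symm hf' hsym, hf1]
  ring

lemma tendsto_H4_middle (hf : ContDiffOn ℝ 2 f (Ioi 0)) (hpos : ∀ x > (0:ℝ), 0 < f x)
    (hx : 0 < x) (hy : 0 < y) :
    Tendsto (fun q => H4 f x q y) (𝓝[≠] x)
      (𝓝 (y * deriv f (y / x) ^ 2 / (x ^ 2 * f (y / x) ^ 2))) := by
  have hcont : ContinuousAt (fun q => H4 f x q y) x := by
    have := (hasDerivAt_d1logMC_snd hf hpos hx hy).continuousAt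
    unfold H4
    fun_prop
  convert hcont.tendsto.mono_left nhdsWithin_le_nhds using 2
  have := hpos _ (div_pos hy hx)
  rw [H4, d1logMC_eq (hf.differentiableOn (by norm_num)) hpos hy hx]
  field_simp

lemma tendsto_H4_last (hf : ContDiffOn ℝ 2 f (Ioi 0)) (hpos : ∀ x > (0:ℝ), 0 < f x)
    (hf1 : f 1 = 1) (hsym : ∀ x > (0:ℝ), f x = x * f (1/x)) (hx : 0 < x) (hy : 0 < y) :
    Tendsto (fun q => H4 f x y q) (𝓝[≠] x)
      (𝓝 (deriv f (x / y) / (2 * y * f (x / y)))) := by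
  have hf' : DifferentiableOn ℝ f (Ioi 0) := hf.differentiableOn (by norm_num)
  have hcont : ContinuousAt (fun q => H4 f x y q) x := by
    have := continuousAt_d1logMC_fst hf hpos hx hx
    have := continuousAt_d1logMC_fst hf hpos hx hy
    unfold H4
    fun_prop
  convert hcont.tendsto.mono_left nhdsWithin_le_nhds using 2
  have := hpos _ (div_pos hx hy)
  rw [H4, d1logMC_eq hf' hpos hx hx, d1logMC_eq hf' hpos hx hy, div_self hx.ne', hf1,
    deriv_one_of_symm hf' hsym, hf1]
  field_simp

end

/-- the scalar curvature
`sh₁ − (1/2)·sh₂ + 2·sh₃ − sh₄ + 3/2` at the state with eigenvalues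
`x = (1+a)/2`, `y = (1−a)/2` equals the explicit formula `r(a)` of the paper,
with `c = (1−a)/(1+a)`. -/
theorem stmt_5 (f : ℝ → ℝ)
    (hf : ContDiffOn ℝ 2 f (Set.Ioi 0))
    (hpos : ∀ x > (0:ℝ), 0 < f x)
    (hf1 : f 1 = 1)
    (hsym : ∀ x > (0:ℝ), f x = x * f (1/x))
    (a : ℝ) (ha1 : -1 < a) (ha2 : a < 1) (ha0 : a ≠ 0) :
    sh (H1 f) ((1+a)/2) ((1-a)/2)
      - (1/2) * sh (H2 f) ((1+a)/2) ((1-a)/2)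
      + 2 * sh (H3 f) ((1+a)/2) ((1-a)/2)
      - sh (H4 f) ((1+a)/2) ((1-a)/2) + 3/2 =
    14*(a - 1) * (deriv f ((1-a)/(1+a)))^2 / ((1+a)^3 * (f ((1-a)/(1+a)))^2)
      + 2*(a^2 + 7*a - 6) * deriv f ((1-a)/(1+a)) / ((1+a)^2 * a * f ((1-a)/(1+a)))
      + 8*(1 - a) * deriv (deriv f) ((1-a)/(1+a)) / ((1+a)^3 * f ((1-a)/(1+a)))
      + 2*(1+a) * f ((1-a)/(1+a)) / a^2
      + (3*a^3 + 5*a^2 + 8*a - 4) / (2*(1+a)*a^2) := by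
  have hx : 0 < (1 + a) / 2 := by linarith
  have hy : 0 < (1 - a) / 2 := by linarith
  have hxy : (1 + a) / 2 ≠ (1 - a) / 2 := fun h => ha0 (by linarith)
  have hf' : DifferentiableOn ℝ f (Ioi 0) := hf.differentiableOn (by norm_num)
  rw [sh_eq_of_tendsto (tendsto_H1_middle hf' hpos hf1 hx hy hxy)
      (tendsto_H1_last hf' hpos hf1 hsym hx hy hxy) (tendsto_H1_middle hf' hpos hf1 hy hx hxy.symm)
      (tendsto_H1_last hf' hpos hf1 hsym hy hx hxy.symm),
    sh_eq_of_tendsto (tendsto_H2_middle hf' hpos hf1 hx hy)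
      (tendsto_H2_last hf' hpos hf1 hsym hx hy hxy) (tendsto_H2_middle hf' hpos hf1 hy hx)
      (tendsto_H2_last hf' hpos hf1 hsym hy hx hxy.symm),
    sh_eq_of_tendsto (tendsto_H3_middle hf hpos hx hy) (tendsto_H3_last hf hpos hf1 hsym hx hy)
      (tendsto_H3_middle hf hpos hy hx) (tendsto_H3_last hf hpos hf1 hsym hy hx),
    sh_eq_of_tendsto (tendsto_H4_middle hf hpos hx hy) (tendsto_H4_last hf hpos hf1 hsym hx hy)
      (tendsto_H4_middle hf hpos hy hx) (tendsto_H4_last hf hpos hf1 hsym hy hx)]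
  have hu := div_pos hx hy
  have hc : (1 - a) / 2 / ((1 + a) / 2) = (1 - a) / (1 + a) := by field_simp
  rw [hsym _ hu, deriv_eq_of_symm hf' hsym hu, deriv_deriv_eq_of_symm hf hsym hu, one_div_div, hc]
  have hp : 0 < 1 + a := by linarith
  have hm : 0 < 1 - a := by linarith
  have hF := hpos _ (div_pos hm hp)
  rw [show (1 + a) / 2 - (1 - a) / 2 = a by ring, show (1 - a) / 2 - (1 + a) / 2 = -a by ring]
  field_simp
  ring
end
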